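/- For all m, n ≥ 2, there exists a density matrix ρ ∈ M_m(ℂ) ⊗ M_n(ℂ) such that ρ^Γ has exactly (m−1)(n−1) negative eigenvalues (counted with multiplicity). -/

import Mathlib

/-!
Let `a k = ∑_{p < m} (p + 1) ^ k` and let `M` be the Gram matrix of the vectors that carry the
weights `(p + 1) ^ (i + α)` on one diagonal `i - α = const` of `Fin m × Fin n`; it is positive
definite by a Vandermonde argument, so `ρ₀ = M - ε • 1` is positive definite for small `ε > 0`.
Since `M (i, α) (j, β) = a (i + α + j + β)` when `i - α = j - β` and `0` otherwise, the partial
transpose `S = ptranspose M` is block diagonal along the antidiagonals `i + α = l`, the block being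
`a (2 l)` times the all-ones matrix. Hence `ptranspose ρ₀ = S - ε • 1` equals `-ε` on the
`(m - 1)(n - 1)`-dimensional space orthogonal to the `m + n - 1` antidiagonal indicator vectors,
and is positive semidefinite on their span, because `a (2 l)` is a diagonal entry of `M` and so
exceeds `ε`. Sylvester's law of inertia then counts exactly `(m - 1)(n - 1)` negative eigenvalues,
and normalizing the trace of `ρ₀` gives the state.
-/

open Matrix Complex Finset
open scoped ComplexOrder

def ptranspose {m n : ℕ} (ρ : Matrix (Fin m × Fin n) (Fin m × Fin n) ℂ) :
    Matrix (Fin m × Fin n) (Fin m × Fin n) ℂ :=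
  fun a b => ρ (a.1, b.2) (b.1, a.2)

namespace Matrix

variable {𝕜 ι κ : Type*} [RCLike 𝕜] [Fintype ι] [Fintype κ]

theorem star_sum_smul_dotProduct_sum_smul {v : κ → ι → 𝕜}
    (horth : Pairwise fun k l => star (v k) ⬝ᵥ v l = 0) (c d : κ → 𝕜) :
    star (∑ k, c k • v k) ⬝ᵥ ∑ k, d k • v k = ∑ k, star (c k) * d k * (star (v k) ⬝ᵥ v k) := by
  classical
  simp only [star_sum, star_smul, sum_dotProduct, dotProduct_sum, smul_dotProduct,
    dotProduct_smul, smul_eq_mul]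
  refine Finset.sum_congr rfl fun k _ => ?_
  rw [Finset.sum_eq_single k (fun l _ hlk => by rw [horth hlk, mul_zero]) (by simp)]
  ring

theorem linearIndependent_of_pairwise_star_dotProduct_eq_zero {v : κ → ι → 𝕜}
    (hv : ∀ k, v k ≠ 0) (horth : Pairwise fun k l => star (v k) ⬝ᵥ v l = 0) :
    LinearIndependent 𝕜 v := by
  classical
  refine Fintype.linearIndependent_iff.2 fun g hg k => ?_
  have h := congrArg (star (v k) ⬝ᵥ ·) hg
  simp only [dotProduct_sum, dotProduct_smul, smul_eq_mul, dotProduct_zero] at h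
  rw [Finset.sum_eq_single k (fun l _ hlk => by rw [horth hlk.symm, mul_zero]) (by simp)] at h
  exact (mul_eq_zero.1 h).resolve_right (dotProduct_star_self_eq_zero.not.2 (hv k))

variable {A : Matrix ι ι 𝕜} {v : κ → ι → 𝕜} {μ : κ → 𝕜}

theorem star_dotProduct_mulVec_sum_smul (horth : Pairwise fun k l => star (v k) ⬝ᵥ v l = 0)
    (hAv : ∀ k, A *ᵥ v k = μ k • v k) (c : κ → 𝕜) :
    star (∑ k, c k • v k) ⬝ᵥ (A *ᵥ ∑ k, c k • v k)
      = ∑ k, star (c k) * c k * μ k * (star (v k) ⬝ᵥ v k) := by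
  have hA : A *ᵥ ∑ k, c k • v k = ∑ k, (c k * μ k) • v k := by
    simp only [mulVec_sum, mulVec_smul, hAv, smul_smul]
  rw [hA, star_sum_smul_dotProduct_sum_smul horth]
  simp only [mul_assoc]

theorem star_dotProduct_mulVec_nonneg_of_mem_span
    (horth : Pairwise fun k l => star (v k) ⬝ᵥ v l = 0)
    (hAv : ∀ k, A *ᵥ v k = μ k • v k) (hμ : ∀ k, 0 ≤ μ k) {x : ι → 𝕜}
    (hx : x ∈ Submodule.span 𝕜 (Set.range v)) : 0 ≤ star x ⬝ᵥ (A *ᵥ x) := by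
  obtain ⟨c, rfl⟩ := (Submodule.mem_span_range_iff_exists_fun 𝕜).1 hx
  rw [star_dotProduct_mulVec_sum_smul horth hAv]
  exact Finset.sum_nonneg fun k _ =>
    mul_nonneg (mul_nonneg (star_mul_self_nonneg _) (hμ k)) (dotProduct_star_self_nonneg _)

theorem star_dotProduct_mulVec_neg_of_mem_span
    (horth : Pairwise fun k l => star (v k) ⬝ᵥ v l = 0)
    (hAv : ∀ k, A *ᵥ v k = μ k • v k) (hμ : ∀ k, μ k < 0) {x : ι → 𝕜}
    (hx : x ∈ Submodule.span 𝕜 (Set.range v)) (hx0 : x ≠ 0) : star x ⬝ᵥ (A *ᵥ x) < 0 := by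
  obtain ⟨c, rfl⟩ := (Submodule.mem_span_range_iff_exists_fun 𝕜).1 hx
  obtain ⟨k, hk⟩ : ∃ k, c k • v k ≠ 0 := by
    by_contra! h
    exact hx0 (Finset.sum_eq_zero fun k _ => h k)
  obtain ⟨hck, hvk⟩ := smul_ne_zero_iff.1 hk
  rw [star_dotProduct_mulVec_sum_smul horth hAv]
  refine Finset.sum_neg' (fun l _ => ?_) ⟨k, Finset.mem_univ k, ?_⟩
  · exact mul_nonpos_of_nonpos_of_nonneg
      (mul_nonpos_of_nonneg_of_nonpos (star_mul_self_nonneg _) (hμ l).le)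
      (dotProduct_star_self_nonneg _)
  · exact mul_neg_of_neg_of_pos
      (mul_neg_of_pos_of_neg (star_mul_self_pos (IsRegular.of_ne_zero hck)) (hμ k))
      (dotProduct_star_self_pos_iff.2 hvk)

theorem disjoint_of_star_dotProduct_mulVec_neg_of_nonneg {V W : Submodule 𝕜 (ι → 𝕜)}
    (hV : ∀ x ∈ V, x ≠ 0 → star x ⬝ᵥ (A *ᵥ x) < 0) (hW : ∀ x ∈ W, 0 ≤ star x ⬝ᵥ (A *ᵥ x)) :
    Disjoint V W := by
  refine Submodule.disjoint_def.2 fun x hxV hxW => ?_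
  by_contra hx
  exact (hV x hxV hx).not_ge (hW x hxW)

/-- A form of Sylvester's law of inertia. -/
theorem IsHermitian.card_neg_eigenvalues_eq_finrank [DecidableEq ι] (hA : A.IsHermitian)
    {V W : Submodule 𝕜 (ι → 𝕜)}
    (hV : ∀ x ∈ V, x ≠ 0 → star x ⬝ᵥ (A *ᵥ x) < 0) (hW : ∀ x ∈ W, 0 ≤ star x ⬝ᵥ (A *ᵥ x))
    (hdim : Module.finrank 𝕜 V + Module.finrank 𝕜 W = Fintype.card ι) :
    #{i | hA.eigenvalues i < 0} = Module.finrank 𝕜 V := by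
  set u : ι → ι → 𝕜 := fun i => ⇑(hA.eigenvectorBasis i)
  have hdot (i j : ι) : star (u i) ⬝ᵥ u j = if i = j then 1 else 0 := by
    rw [dotProduct_comm, ← EuclideanSpace.inner_eq_star_dotProduct,
      orthonormal_iff_ite.1 hA.eigenvectorBasis.orthonormal]
  have horth : Pairwise fun i j => star (u i) ⬝ᵥ u j = 0 := fun i j hij => by
    simp only [hdot, if_neg hij]
  have hAu (i : ι) : A *ᵥ u i = (hA.eigenvalues i : 𝕜) • u i := by
    rw [hA.mulVec_eigenvectorBasis, RCLike.real_smul_eq_coe_smul (K := 𝕜)]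
  have hli : LinearIndependent 𝕜 u := linearIndependent_of_pairwise_star_dotProduct_eq_zero
    (fun i hi => by simpa [hi] using hdot i i) horth
  have finrank_span (s : Finset ι) :
      Module.finrank 𝕜 (Submodule.span 𝕜 (Set.range fun i : s => u i)) = #s :=
    (finrank_span_eq_card (hli.comp _ Subtype.val_injective)).trans (Fintype.card_coe s)
  set N : Finset ι := {i | hA.eigenvalues i < 0}
  have hneg : ∀ x ∈ Submodule.span 𝕜 (Set.range fun i : N => u i), x ≠ 0 →
      star x ⬝ᵥ (A *ᵥ x) < 0 := by
    intro x hx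
    refine star_dotProduct_mulVec_neg_of_mem_span (v := fun i : N => u i)
      (fun i j hij => horth (Subtype.coe_ne_coe.2 hij)) (fun i => hAu i) (fun i => ?_) hx
    exact_mod_cast (Finset.mem_filter.1 i.2).2
  have hnonneg : ∀ x ∈ Submodule.span 𝕜 (Set.range fun i : (Nᶜ : Finset ι) => u i),
      0 ≤ star x ⬝ᵥ (A *ᵥ x) := by
    intro x hx
    refine star_dotProduct_mulVec_nonneg_of_mem_span (v := fun i : (Nᶜ : Finset ι) => u i)
      (fun i j hij => horth (Subtype.coe_ne_coe.2 hij)) (fun i => hAu i) (fun i => ?_) hx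
    have hi := Finset.mem_compl.1 i.2
    simp only [N, Finset.mem_filter, Finset.mem_univ, true_and, not_lt] at hi
    exact_mod_cast hi
  have h₁ := Submodule.finrank_add_finrank_le_of_disjoint
    (disjoint_of_star_dotProduct_mulVec_neg_of_nonneg hneg hW)
  have h₂ := Submodule.finrank_add_finrank_le_of_disjoint
    (disjoint_of_star_dotProduct_mulVec_neg_of_nonneg hV hnonneg)
  rw [finrank_span, Module.finrank_pi] at h₁ h₂
  rw [Finset.card_compl] at h₂
  have := N.card_le_univ
  omega

open scoped MatrixOrder in
theorem PosDef.exists_pos_sub_smul_one_posDef [DecidableEq ι] [Nonempty ι] (hA : A.PosDef) :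
    ∃ ε : ℝ, 0 < ε ∧ (A - (ε : 𝕜) • 1).PosDef := by
  obtain ⟨r, hr, hle⟩ := (CFC.exists_pos_algebraMap_le_iff hA.isHermitian.isSelfAdjoint).2
    fun x hx => hA.isStrictlyPositive.spectrum_pos hx
  refine ⟨r / 2, half_pos hr, ?_⟩
  have hsplit : A - ((r / 2 : ℝ) : 𝕜) • 1 = (A - algebraMap ℝ _ r) + ((r / 2 : ℝ) : 𝕜) • 1 := by
    rw [Algebra.algebraMap_eq_smul_one, RCLike.real_smul_eq_coe_smul (K := 𝕜)]
    push_cast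
    module
  rw [hsplit]
  exact PosDef.posSemidef_add (le_iff.1 hle) (PosDef.one.smul (by exact_mod_cast half_pos hr))

end Matrix

section PartialTranspose

variable {m n : ℕ}

theorem ptranspose_apply (ρ : Matrix (Fin m × Fin n) (Fin m × Fin n) ℂ) (a b : Fin m × Fin n) :
    ptranspose ρ a b = ρ (a.1, b.2) (b.1, a.2) := rfl

@[simp]
theorem ptranspose_sub (ρ σ : Matrix (Fin m × Fin n) (Fin m × Fin n) ℂ) :
    ptranspose (ρ - σ) = ptranspose ρ - ptranspose σ := rfl

@[simp]
theorem ptranspose_smul (c : ℂ) (ρ : Matrix (Fin m × Fin n) (Fin m × Fin n) ℂ) :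
    ptranspose (c • ρ) = c • ptranspose ρ := rfl

@[simp]
theorem ptranspose_one : ptranspose (1 : Matrix (Fin m × Fin n) (Fin m × Fin n) ℂ) = 1 := by
  ext a b
  simp only [ptranspose_apply, one_apply, Prod.ext_iff]
  exact if_congr (and_congr Iff.rfl eq_comm) rfl rfl

theorem Matrix.IsHermitian.ptranspose {ρ : Matrix (Fin m × Fin n) (Fin m × Fin n) ℂ}
    (hρ : ρ.IsHermitian) : (ptranspose ρ).IsHermitian := by
  ext a b
  rw [conjTranspose_apply, ptranspose_apply, ptranspose_apply, ← hρ.apply, star_star]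

end PartialTranspose

namespace MomentState

variable (m n : ℕ)

def powerSum (k : ℕ) : ℂ := ∑ p : Fin m, ((p : ℂ) + 1) ^ k

def diagonalVandermonde : Matrix (Fin m × Fin (m + n)) (Fin m × Fin n) ℂ :=
  of fun q z => if (z.1 : ℕ) + n = z.2 + q.2 then ((q.1 : ℂ) + 1) ^ ((z.1 : ℕ) + z.2) else 0

def momentMatrix : Matrix (Fin m × Fin n) (Fin m × Fin n) ℂ :=
  (diagonalVandermonde m n)ᴴ * diagonalVandermonde m n

def antidiag (l : ℕ) : Fin m × Fin n → ℂ := fun z => if (z.1 : ℕ) + z.2 = l then 1 else 0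

theorem diagonalVandermonde_mulVec_apply_mul_pow (x : Fin m × Fin n → ℂ) (p : Fin m)
    (t : Fin (m + n)) :
    (diagonalVandermonde m n *ᵥ x) (p, t) * ((p : ℂ) + 1) ^ (t : ℕ)
      = (∑ i : Fin m, (∑ α : Fin n, if (i : ℕ) + n = α + t then x (i, α) else 0)
          * (((p : ℂ) + 1) ^ 2) ^ (i : ℕ)) * ((p : ℂ) + 1) ^ n := by
  simp only [mulVec, dotProduct, diagonalVandermonde, of_apply, Fintype.sum_prod_type,
    Finset.sum_mul]
  refine Finset.sum_congr rfl fun i _ => Finset.sum_congr rfl fun α _ => ?_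
  split_ifs with h
  · have hexp : ((p : ℂ) + 1) ^ ((i : ℕ) + α) * ((p : ℂ) + 1) ^ (t : ℕ)
        = ((p : ℂ) + 1) ^ (2 * (i : ℕ)) * ((p : ℂ) + 1) ^ n := by
      rw [← pow_add, ← pow_add]
      congr 1
      omega
    rw [← pow_mul]
    linear_combination x (i, α) * hexp
  · simp

theorem diagonalVandermonde_mulVec_injective :
    Function.Injective (diagonalVandermonde m n).mulVec := by
  refine (injective_iff_map_eq_zero (diagonalVandermonde m n).mulVecLin).2 fun x hx => ?_
  ext ⟨i₀, α₀⟩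
  set t₀ : Fin (m + n) := ⟨i₀ + n - α₀, by omega⟩
  set c : Fin m → ℂ := fun i => ∑ α : Fin n, if (i : ℕ) + n = α + t₀ then x (i, α) else 0
  have hc : c = 0 := by
    refine eq_zero_of_forall_index_sum_mul_pow_eq_zero
      (f := fun p : Fin m => ((p : ℂ) + 1) ^ 2) (fun p q hpq => ?_) fun p => ?_
    · have h : ((p : ℕ) + 1) ^ 2 = ((q : ℕ) + 1) ^ 2 :=
        Nat.cast_injective (R := ℂ) (by push_cast; exact hpq)
      exact Fin.ext (by simpa using h)
    · have h := diagonalVandermonde_mulVec_apply_mul_pow m n x p t₀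
      rw [← mulVecLin_apply, hx, Pi.zero_apply, zero_mul, eq_comm] at h
      exact (mul_eq_zero.1 h).resolve_right (pow_ne_zero _ (by exact_mod_cast p.val.succ_ne_zero))
  have hc₀ : c i₀ = 0 := congrFun hc i₀
  rw [Pi.zero_apply, ← hc₀]
  simp only [c]
  rw [Finset.sum_eq_single α₀, if_pos (by simp only [t₀]; omega)]
  · exact fun α _ hα => if_neg fun h => hα (Fin.ext (by simp only [t₀] at h; omega))
  · simp

theorem posDef_momentMatrix : (momentMatrix m n).PosDef :=
  PosDef.conjTranspose_mul_self _ (diagonalVandermonde_mulVec_injective m n)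

theorem ptranspose_momentMatrix_apply (x y : Fin m × Fin n) :
    ptranspose (momentMatrix m n) x y
      = powerSum m (2 * (x.1 + x.2)) * antidiag m n (x.1 + x.2) y := by
  obtain ⟨⟨i, hi⟩, ⟨α, hα⟩⟩ := x
  obtain ⟨⟨j, hj⟩, ⟨β, hβ⟩⟩ := y
  simp only [ptranspose_apply, momentMatrix, mul_apply, conjTranspose_apply, diagonalVandermonde,
    of_apply, antidiag, Fintype.sum_prod_type, powerSum, Finset.sum_mul]
  refine Finset.sum_congr rfl fun p _ => ?_
  split_ifs with h
  -- only the diagonal through `(i, β)` can contribute, and it passes through `(j, α)` iff `h`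
  · rw [Finset.sum_eq_single ⟨i + n - β, by omega⟩]
    · rw [if_pos (by simp only; omega), if_pos (by simp only; omega), star_pow, star_add,
        star_natCast, star_one, ← pow_add, mul_one]
      congr 1
      omega
    · intro t _ ht
      rw [if_neg, star_zero, zero_mul]
      exact fun h' => ht (Fin.ext (by simp at h' ⊢; omega))
    · simp
  · rw [mul_zero]
    refine Finset.sum_eq_zero fun t _ => ?_
    split_ifs with h₁ h₂
    · exact absurd (by omega) h
    all_goals simp

theorem momentMatrix_apply_self (z : Fin m × Fin n) :
    momentMatrix m n z z = powerSum m (2 * (z.1 + z.2)) := by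
  calc momentMatrix m n z z = ptranspose (momentMatrix m n) z z := rfl
    _ = _ := by simp [ptranspose_momentMatrix_apply, antidiag]

theorem ptranspose_momentMatrix_mulVec_apply (x : Fin m × Fin n → ℂ) (z : Fin m × Fin n) :
    (ptranspose (momentMatrix m n) *ᵥ x) z
      = powerSum m (2 * (z.1 + z.2)) * (antidiag m n (z.1 + z.2) ⬝ᵥ x) := by
  simp only [mulVec, dotProduct, ptranspose_momentMatrix_apply, mul_assoc, Finset.mul_sum]

theorem star_antidiag (l : ℕ) : star (antidiag m n l) = antidiag m n l := by
  ext z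
  simp only [antidiag, Pi.star_apply, apply_ite star, star_one, star_zero]

theorem antidiag_dotProduct_antidiag_of_ne {k l : ℕ} (hkl : k ≠ l) :
    antidiag m n k ⬝ᵥ antidiag m n l = 0 :=
  Finset.sum_eq_zero fun z _ => by
    simp only [antidiag]
    split_ifs <;> simp_all

theorem antidiag_dotProduct_self (l : ℕ) :
    antidiag m n l ⬝ᵥ antidiag m n l = #{z : Fin m × Fin n | (z.1 : ℕ) + z.2 = l} := by
  simp +contextual [dotProduct, antidiag, Finset.sum_boole]

theorem pairwise_star_antidiag_dotProduct_antidiag :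
    Pairwise fun k l : Fin (m + n - 1) => star (antidiag m n k) ⬝ᵥ antidiag m n l = 0 :=
  fun k _ hkl => (congrArg (· ⬝ᵥ _) (star_antidiag m n k)).trans
    (antidiag_dotProduct_antidiag_of_ne m n (Fin.val_injective.ne hkl))

theorem ptranspose_momentMatrix_mulVec_antidiag (l : ℕ) :
    ptranspose (momentMatrix m n) *ᵥ antidiag m n l
      = (powerSum m (2 * l) * (antidiag m n l ⬝ᵥ antidiag m n l)) • antidiag m n l := by
  ext z
  rw [ptranspose_momentMatrix_mulVec_apply, Pi.smul_apply, smul_eq_mul]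
  by_cases hz : (z.1 : ℕ) + z.2 = l
  · simp only [hz, antidiag, if_true, mul_one]
  · rw [antidiag_dotProduct_antidiag_of_ne m n hz]
    simp [antidiag, hz]

variable {m n}

theorem ptranspose_momentMatrix_mulVec_eq_zero {x : Fin m × Fin n → ℂ}
    (hx : ∀ l < m + n - 1, antidiag m n l ⬝ᵥ x = 0) :
    ptranspose (momentMatrix m n) *ᵥ x = 0 := by
  ext z
  rw [ptranspose_momentMatrix_mulVec_apply, hx _ (by omega), mul_zero, Pi.zero_apply]

theorem exists_fst_add_snd_eq (hm : 0 < m) (hn : 0 < n) {l : ℕ} (hl : l < m + n - 1) :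
    ∃ z : Fin m × Fin n, (z.1 : ℕ) + z.2 = l :=
  ⟨(⟨min l (m - 1), by omega⟩, ⟨l - min l (m - 1), by omega⟩), by simp only; omega⟩

theorem one_le_antidiag_dotProduct_self (hm : 0 < m) (hn : 0 < n) {l : ℕ}
    (hl : l < m + n - 1) : 1 ≤ antidiag m n l ⬝ᵥ antidiag m n l := by
  obtain ⟨z, hz⟩ := exists_fst_add_snd_eq hm hn hl
  rw [antidiag_dotProduct_self, Nat.one_le_cast, Nat.one_le_iff_ne_zero, Finset.card_ne_zero]
  exact ⟨z, Finset.mem_filter.2 ⟨Finset.mem_univ z, hz⟩⟩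

theorem finrank_span_antidiag (hm : 0 < m) (hn : 0 < n) :
    Module.finrank ℂ (Submodule.span ℂ (Set.range fun l : Fin (m + n - 1) => antidiag m n l))
      = m + n - 1 := by
  rw [finrank_span_eq_card, Fintype.card_fin]
  refine linearIndependent_of_pairwise_star_dotProduct_eq_zero (fun l h => ?_)
    (pairwise_star_antidiag_dotProduct_antidiag m n)
  have := one_le_antidiag_dotProduct_self hm hn l.isLt
  rw [h, dotProduct_zero] at this
  exact zero_lt_one.not_ge this

variable (m n) in
theorem finrank_ker_add_finrank_span_antidiag :
    Module.finrank ℂ (LinearMap.ker (of fun l : Fin (m + n - 1) => antidiag m n l).mulVecLin)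
      + Module.finrank ℂ (Submodule.span ℂ (Set.range fun l : Fin (m + n - 1) => antidiag m n l))
      = m * n := by
  have := LinearMap.finrank_range_add_finrank_ker
    (of fun l : Fin (m + n - 1) => antidiag m n l).mulVecLin
  rw [← Matrix.rank, rank_eq_finrank_span_row, Module.finrank_pi, Fintype.card_prod,
    Fintype.card_fin, Fintype.card_fin] at this
  rw [← this, add_comm]
  rfl

theorem card_neg_eigenvalues_ptranspose (hm : 0 < m) (hn : 0 < n) {c ε : ℂ} (hc : 0 < c)
    (hε : 0 < ε) (hεa : ∀ l < m + n - 1, ε ≤ powerSum m (2 * l))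
    (hΓ : (ptranspose (c • (momentMatrix m n - ε • 1))).IsHermitian) :
    #{i | hΓ.eigenvalues i < 0} = (m - 1) * (n - 1) := by
  have hA : ptranspose (c • (momentMatrix m n - ε • 1))
      = c • (ptranspose (momentMatrix m n) - ε • 1) := by simp
  have hdim := finrank_ker_add_finrank_span_antidiag m n
  rw [hΓ.card_neg_eigenvalues_eq_finrank ?_ ?_
    (by rwa [Fintype.card_prod, Fintype.card_fin, Fintype.card_fin])]
  · have hmn : (m - 1) * (n - 1) + (m + n - 1) = m * n := by
      obtain ⟨m, rfl⟩ := Nat.exists_eq_add_of_lt hm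
      obtain ⟨n, rfl⟩ := Nat.exists_eq_add_of_lt hn
      simp only [zero_add, Nat.add_sub_cancel]
      ring_nf
      omega
    rw [finrank_span_antidiag hm hn] at hdim
    omega
  · intro x hx hx0
    have hSx := ptranspose_momentMatrix_mulVec_eq_zero (x := x) fun l hl => congrFun hx ⟨l, hl⟩
    rw [hA, smul_mulVec, sub_mulVec, hSx, smul_mulVec, one_mulVec, zero_sub, smul_neg,
      dotProduct_neg, dotProduct_smul, dotProduct_smul, smul_eq_mul, smul_eq_mul, neg_lt_zero]
    exact mul_pos hc (mul_pos hε (dotProduct_star_self_pos_iff.2 hx0))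
  · intro x hx
    refine star_dotProduct_mulVec_nonneg_of_mem_span
      (μ := fun l : Fin (m + n - 1) =>
        c * (powerSum m (2 * l) * (antidiag m n l ⬝ᵥ antidiag m n l) - ε))
      (pairwise_star_antidiag_dotProduct_antidiag m n) (fun l => ?_) (fun l => ?_) hx
    · rw [hA, smul_mulVec, sub_mulVec, ptranspose_momentMatrix_mulVec_antidiag, smul_mulVec,
        one_mulVec, ← sub_smul, smul_smul]
    · refine mul_nonneg hc.le (sub_nonneg.2 ?_)
      exact (hεa l l.isLt).trans (le_mul_of_one_le_right (hε.le.trans (hεa l l.isLt))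
        (one_le_antidiag_dotProduct_self hm hn l.isLt))

end MomentState

theorem stmt_18 (m n : ℕ) (hm : 2 ≤ m) (hn : 2 ≤ n) :
    ∃ ρ : Matrix (Fin m × Fin n) (Fin m × Fin n) ℂ,
      ρ.PosSemidef ∧ ρ.trace = 1 ∧
      ∃ hΓ : (ptranspose ρ).IsHermitian,
        (Finset.univ.filter fun i => hΓ.eigenvalues i < 0).card
          = (m - 1) * (n - 1) := by
  have : Nonempty (Fin m × Fin n) := ⟨(⟨0, by omega⟩, ⟨0, by omega⟩)⟩
  obtain ⟨ε, hε, hρ₀⟩ := (MomentState.posDef_momentMatrix m n).exists_pos_sub_smul_one_posDef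
  have hεa : ∀ l < m + n - 1, (ε : ℂ) ≤ MomentState.powerSum m (2 * l) := fun l hl => by
    obtain ⟨z, rfl⟩ := MomentState.exists_fst_add_snd_eq (by omega) (by omega) hl
    have := hρ₀.diag_pos (i := z)
    rw [Matrix.sub_apply, MomentState.momentMatrix_apply_self, Matrix.smul_apply, one_apply_eq,
      smul_eq_mul, mul_one, sub_pos] at this
    exact this.le
  have hc : 0 < (MomentState.momentMatrix m n - (ε : ℂ) • 1).trace⁻¹ := inv_pos.2 hρ₀.trace_pos
  have hρ := hρ₀.posSemidef.smul hc.le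
  refine ⟨_, hρ, ?_, hρ.isHermitian.ptranspose, ?_⟩
  · rw [trace_smul, smul_eq_mul]
    exact inv_mul_cancel₀ hρ₀.trace_pos.ne'
  · exact MomentState.card_neg_eigenvalues_ptranspose (by omega) (by omega) hc
      (by exact_mod_cast hε) hεa _
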